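/- For every real number α with 0 ≤ α ≤ π/4, we have α ≤ tan α ≤ α + α³. -/
import Mathlib

theorem tan_small_angle_bounds (α : ℝ) (h0 : 0 ≤ α) (h1 : α ≤ Real.pi / 4) :
    α ≤ Real.tan α ∧ Real.tan α ≤ α + α ^ 3 := by
  have hπ : Real.pi / 4 < 1 := by
    have := Real.pi_lt_d2; linarith
  have hα1 : α < 1 := lt_of_le_of_lt h1 hπ
  have hhalf : α < Real.pi / 2 := by
    have := Real.pi_pos; linarith
  constructor
  · rcases eq_or_lt_of_le h0 with rfl | h0'
    · simp
    · exact (Real.lt_tan h0' hhalf).le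
  · have hsin : Real.sin α ≤ α := Real.sin_le h0
    have hcos : 1 - α ^ 2 / 2 ≤ Real.cos α := Real.one_sub_sq_div_two_le_cos
    have hcpos : 0 < 1 - α ^ 2 / 2 := by nlinarith
    have hcos' : 0 < Real.cos α := lt_of_lt_of_le hcpos hcos
    rw [Real.tan_eq_sin_div_cos, div_le_iff₀ hcos']
    calc Real.sin α ≤ α := hsin
      _ ≤ (α + α ^ 3) * (1 - α ^ 2 / 2) := by nlinarith [mul_nonneg (pow_nonneg h0 3) (by nlinarith : (0:ℝ) ≤ 1 - α ^ 2)]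
      _ ≤ (α + α ^ 3) * Real.cos α := by
          apply mul_le_mul_of_nonneg_left hcos (by positivity)
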